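/- Let (T0, T̃0) be a pair of densely defined linear operators with common dense domain D on a complex Hilbert space H satisfying conditions (T1) and (T2). For every subset X ⊆ W, the set X^[⊥] is a closed subspace of W with respect to the graph norm. Moreover, for a subspace X of W, one has X^[⊥][⊥] = X if and only if X is closed in W (with respect to the graph norm) and W0 ⊆ X. -/

import Mathlib

open scoped InnerProductSpace
open Filter Topology LinearPMap

noncomputable section

variable {H : Type*} [NormedAddCommGroup H] [InnerProductSpace ℂ H] [CompleteSpace H]

/-- The inner product used in the paper (antilinear in the **second** entry):
`pInner x y = ⟪y, x⟫` in Mathlib's convention. -/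
def pInner {H : Type*} [NormedAddCommGroup H] [InnerProductSpace ℂ H] (x y : H) : ℂ :=
  ⟪y, x⟫_ℂ

/-- A pair of densely defined operators with common domain satisfying conditions (T1) and (T2). -/
structure IsDualPairT12 (T0 T0t : H →ₗ.[ℂ] H) (lam : ℝ) : Prop where
  dom_eq : T0.domain = T0t.domain
  dense' : Dense (T0.domain : Set H)
  sym : ∀ (φ : T0.domain) (ψ : T0t.domain), pInner (T0 φ) (ψ : H) = pInner (φ : H) (T0t ψ)
  lam_pos : 0 < lam
  bound : ∀ (x : H) (hx : x ∈ T0.domain),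
    ‖T0 ⟨x, hx⟩ + T0t ⟨x, dom_eq.le hx⟩‖ ≤ 2 * lam * ‖x‖

/-- A joint pair of abstract Friedrichs operators: (T1), (T2) and (T3). -/
structure IsFriedrichsPair (T0 T0t : H →ₗ.[ℂ] H) (lam mu : ℝ)
    extends IsDualPairT12 T0 T0t lam : Prop where
  mu_pos : 0 < mu
  coercive : ∀ (x : H) (hx : x ∈ T0.domain),
    2 * mu * ‖x‖ ^ 2 ≤ (pInner (T0 ⟨x, hx⟩ + T0t ⟨x, dom_eq.le hx⟩) x).re

/-- The boundary form `[u|v] := ⟨T₁u , v⟩ − ⟨u , T̃₁v⟩` on the graph space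
`W := dom T₁ = dom (T̃₀)*`.  The hypothesis `hW` expresses the fact `dom T₁ = dom T̃₁`. -/
def bform (T0 T0t : H →ₗ.[ℂ] H) (hW : T0t.adjoint.domain = T0.adjoint.domain)
    (u v : T0t.adjoint.domain) : ℂ :=
  pInner (T0t.adjoint u) (v : H) - pInner (u : H) (T0.adjoint ⟨(v : H), hW.le v.2⟩)

/-- `X^[⊥]`, the `[·|·]`-orthogonal complement of `X ⊆ W` in the graph space. -/
def iorth (T0 T0t : H →ₗ.[ℂ] H) (hW : T0t.adjoint.domain = T0.adjoint.domain)
    (X : Set ↥T0t.adjoint.domain) : Set ↥T0t.adjoint.domain :=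
  {u | ∀ v ∈ X, bform T0 T0t hW u v = 0}

/-- `W⁺ = {u ∈ W : [u|u] ≥ 0}`. -/
def Wplus (T0 T0t : H →ₗ.[ℂ] H) (hW : T0t.adjoint.domain = T0.adjoint.domain) :
    Set ↥T0t.adjoint.domain :=
  {u | 0 ≤ (bform T0 T0t hW u u).re}

/-- `W⁻ = {u ∈ W : [u|u] ≤ 0}`. -/
def Wminus (T0 T0t : H →ₗ.[ℂ] H) (hW : T0t.adjoint.domain = T0.adjoint.domain) :
    Set ↥T0t.adjoint.domain :=
  {u | (bform T0 T0t hW u u).re ≤ 0}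

/-- (V)-boundary conditions for a subset `V` of the graph space `W`. -/
def VBC (T0 T0t : H →ₗ.[ℂ] H) (hW : T0t.adjoint.domain = T0.adjoint.domain)
    (V : Set ↥T0t.adjoint.domain) : Prop :=
  V ⊆ Wplus T0 T0t hW ∧ iorth T0 T0t hW V ⊆ Wminus T0 T0t hW ∧
    V = iorth T0 T0t hW (iorth T0 T0t hW V)

/-- The graph norm `‖u‖_{T₁} = ‖u‖ + ‖T₁ u‖` on the graph space. -/
def gnorm (T0t : H →ₗ.[ℂ] H) (u : T0t.adjoint.domain) : ℝ :=
  ‖(u : H)‖ + ‖T0t.adjoint u‖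

/-- The distance associated with the graph norm. -/
def gdist (T0t : H →ₗ.[ℂ] H) (u v : T0t.adjoint.domain) : ℝ := gnorm T0t (u - v)

/-- Closedness (sequential) in the graph-norm topology of `W`. -/
def GClosed (T0t : H →ₗ.[ℂ] H) (X : Set ↥T0t.adjoint.domain) : Prop :=
  ∀ f : ℕ → ↥T0t.adjoint.domain, (∀ n, f n ∈ X) →
    ∀ l, Tendsto (fun n => gdist T0t (f n) l) atTop (𝓝 0) → l ∈ X

/-- `W₀` (the domain of the closure of `T₀`), viewed as a subset of the graph space `W`. -/
def W0set (T0 T0t : H →ₗ.[ℂ] H) : Set ↥T0t.adjoint.domain :=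
  {u | (u : H) ∈ T0.closure.domain}

/-- The graph inner product on `W` (in the paper's convention). -/
def gip (T0t : H →ₗ.[ℂ] H) (u v : ↥T0t.adjoint.domain) : ℂ :=
  pInner (u : H) (v : H) + pInner (T0t.adjoint u) (T0t.adjoint v)

/-- The (Hilbert) orthogonal complement of `W₀` in the graph space. -/
def W0perp (T0 T0t : H →ₗ.[ℂ] H) : Set ↥T0t.adjoint.domain :=
  {u | ∀ v : ↥T0t.adjoint.domain, (v : H) ∈ T0.closure.domain → gip T0t u v = 0}

/-- `ker T₁` as a subset of the graph space. -/
def kerT1set (T0t : H →ₗ.[ℂ] H) : Set ↥T0t.adjoint.domain := {u | T0t.adjoint u = 0}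

/-- `ker T̃₁` as a subset of the graph space. -/
def kerT1tset (T0 T0t : H →ₗ.[ℂ] H) (hW : T0t.adjoint.domain = T0.adjoint.domain) :
    Set ↥T0t.adjoint.domain :=
  {u | T0.adjoint ⟨(u : H), hW.le u.2⟩ = 0}

/-- An operator `M ∈ L(W;W')`, encoded through the pairing `m u v = ⟨Mu, v⟩_{W',W}`
(linear in `u`, antilinear in `v`, and bounded with respect to the graph norm). -/
structure MOp (T0t : H →ₗ.[ℂ] H) where
  m : ↥T0t.adjoint.domain → ↥T0t.adjoint.domain → ℂ
  add_left : ∀ u v w, m (u + v) w = m u w + m v w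
  smul_left : ∀ (c : ℂ) (u w), m (c • u) w = c * m u w
  add_right : ∀ u v w, m u (v + w) = m u v + m u w
  smul_right : ∀ (c : ℂ) (u w), m u (c • w) = starRingEnd ℂ c * m u w
  bounded : ∃ C, ∀ u v, ‖m u v‖ ≤ C * (gnorm T0t u * gnorm T0t v)

/-- The (M)-boundary conditions for a pairing `m u v = ⟨Mu, v⟩_{W',W}`:
(M1) non-negativity and (M2) `W = ker (D − M) + ker (D + M)`. -/
def MBC (T0 T0t : H →ₗ.[ℂ] H) (hW : T0t.adjoint.domain = T0.adjoint.domain)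
    (m : ↥T0t.adjoint.domain → ↥T0t.adjoint.domain → ℂ) : Prop :=
  (∀ u, 0 ≤ (m u u).re) ∧
  (∀ w : ↥T0t.adjoint.domain, ∃ a b : ↥T0t.adjoint.domain,
    (∀ v, bform T0 T0t hW a v = m a v) ∧ (∀ v, bform T0 T0t hW b v + m b v = 0) ∧ w = a + b)

/-- `ker (D − M)` for a pairing `m`. -/
def kerDsubM (T0 T0t : H →ₗ.[ℂ] H) (hW : T0t.adjoint.domain = T0.adjoint.domain)
    (m : ↥T0t.adjoint.domain → ↥T0t.adjoint.domain → ℂ) : Set ↥T0t.adjoint.domain :=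
  {u | ∀ v, bform T0 T0t hW u v = m u v}

/-- `ker (D + M)` for a pairing `m`. -/
def kerDaddM (T0 T0t : H →ₗ.[ℂ] H) (hW : T0t.adjoint.domain = T0.adjoint.domain)
    (m : ↥T0t.adjoint.domain → ↥T0t.adjoint.domain → ℂ) : Set ↥T0t.adjoint.domain :=
  {u | ∀ v, bform T0 T0t hW u v + m u v = 0}


/-!
Embed `W` into `H ⊕ H` by `J u = (T₁u, u)` and put `K v = (v, -T̃₁v)`, so that
`[u|v] = ⟪K v, J u⟫`. As the graph norm is equivalent to `‖J ·‖`, every `X^[⊥]` is the preimage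
under `J` of a closed set, hence closed in `W`.

By (T2), `T₁ + T̃₁` is the bounded symmetric extension of `T₀ + T̃₀`; hence `[·|·]` is hermitian
and `v ∈ X^[⊥]` iff `K v ⊥ J X`. If `W₀ ⊆ X`, then `J X` contains `J D`, the swapped graph of
`T₀`, so every vector orthogonal to `J X` lies in the graph of `-T₀* = -T̃₁`, i.e. is some `K v`.
Thus `K (X^[⊥]) = (J X)ᗮ` and `X^[⊥][⊥] = J⁻¹ (J X)ᗮᗮ`, which is `X` as soon as `J X` is closed,
that is, as soon as `X` is closed in `W`. Conversely, `T̃₁ = T₀*` is a formal adjoint of the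
closure of `T₀`, and `T₁` extends that closure, so `[·|·]` vanishes on `W₀ × W` and every
`X^[⊥]` contains `W₀`.
-/

namespace LinearPMap

variable {𝕜 E F : Type*} [RCLike 𝕜] [NormedAddCommGroup E] [InnerProductSpace 𝕜 E]
  [NormedAddCommGroup F] [InnerProductSpace 𝕜 F]

theorem closure_le_of_le_of_isClosed {f g : E →ₗ.[𝕜] F} (h : f ≤ g) (hg : g.IsClosed) :
    f.closure ≤ g := by
  refine le_of_le_graph ?_
  rw [← (hg.isClosable.leIsClosable h).graph_closure_eq_closure_graph]
  exact Submodule.topologicalClosure_minimal _ (le_graph_of_le h) hg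

theorem IsFormalAdjoint.closure {S : F →ₗ.[𝕜] E} {T : E →ₗ.[𝕜] F} (h : S.IsFormalAdjoint T) :
    S.IsFormalAdjoint T.closure := by
  by_cases hT : T.IsClosable
  · intro x y
    have hgraph : (T.graph : Set (E × F)) ⊆ {p | ⟪S x, p.1⟫_𝕜 = ⟪(x : F), p.2⟫_𝕜} := by
      intro p hp
      obtain ⟨z, hz1, hz2⟩ := T.mem_graph_iff.1 hp
      simpa only [Set.mem_ofPred_eq, ← hz1, ← hz2] using h x z
    have hclosure := closure_minimal hgraph <|
      isClosed_eq (continuous_const.inner continuous_fst) (continuous_const.inner continuous_snd)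
    rw [← Submodule.topologicalClosure_coe, hT.graph_closure_eq_closure_graph] at hclosure
    exact hclosure (T.closure.mem_graph y)
  · rwa [closure_def' hT]

end LinearPMap

namespace IsDualPairT12

section

variable {E : Type*} [NormedAddCommGroup E] [InnerProductSpace ℂ E] {T0 T0t : E →ₗ.[ℂ] E}
  {lam : ℝ}

theorem dense_domain_right (hP : IsDualPairT12 T0 T0t lam) : Dense (T0t.domain : Set E) :=
  hP.dom_eq ▸ hP.dense'

theorem isFormalAdjoint (hP : IsDualPairT12 T0 T0t lam) : T0.IsFormalAdjoint T0t := fun φ ψ => by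
  simpa [pInner] using congrArg (starRingEnd ℂ) (hP.sym φ ψ)

end

variable {T0 T0t : H →ₗ.[ℂ] H} {lam : ℝ}

theorem le_adjoint_right (hP : IsDualPairT12 T0 T0t lam) : T0 ≤ T0t† :=
  hP.isFormalAdjoint.symm.le_adjoint hP.dense_domain_right

theorem closure_le_adjoint_right (hP : IsDualPairT12 T0 T0t lam) : T0.closure ≤ T0t† :=
  closure_le_of_le_of_isClosed hP.le_adjoint_right (adjoint_isClosed hP.dense_domain_right)

def sumCLM (hP : IsDualPairT12 T0 T0t lam) : H →L[ℂ] H :=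
  (LinearMap.mkContinuous (T0.toFun + T0t.toFun ∘ₗ Submodule.inclusion hP.dom_eq.le) (2 * lam)
    fun φ => hP.bound φ.1 φ.2).extend T0.domain.subtypeL

theorem sumCLM_apply (hP : IsDualPairT12 T0 T0t lam) (φ : T0.domain) :
    hP.sumCLM φ = T0 φ + T0t (Submodule.inclusion hP.dom_eq.le φ) :=
  ContinuousLinearMap.extend_eq _ hP.dense'.denseRange_val
    isUniformEmbedding_subtype_val.isUniformInducing _

theorem isSymmetric_sumCLM (hP : IsDualPairT12 T0 T0t lam) :
    (hP.sumCLM : H →ₗ[ℂ] H).IsSymmetric := by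
  intro x y
  refine congrFun (Continuous.ext_on (hP.dense'.prod hP.dense')
    (f := fun p : H × H => ⟪hP.sumCLM p.1, p.2⟫_ℂ) (g := fun p => ⟪p.1, hP.sumCLM p.2⟫_ℂ)
    (by fun_prop) (by fun_prop) ?_) (x, y)
  rintro ⟨φ, ψ⟩ ⟨hφ, hψ⟩
  have h1 := hP.isFormalAdjoint ⟨φ, hφ⟩ (Submodule.inclusion hP.dom_eq.le ⟨ψ, hψ⟩)
  have h2 := hP.isFormalAdjoint.symm (Submodule.inclusion hP.dom_eq.le ⟨φ, hφ⟩) ⟨ψ, hψ⟩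
  simp only [Submodule.coe_inclusion] at h1 h2
  simp only [hP.sumCLM_apply ⟨φ, hφ⟩, hP.sumCLM_apply ⟨ψ, hψ⟩, inner_add_left, inner_add_right,
    h1, h2, add_comm]

theorem adjoint_apply_eq_sub (hP : IsDualPairT12 T0 T0t lam)
    (hW : T0t†.domain = T0†.domain) (u : T0t†.domain) :
    T0† ⟨u, hW.le u.2⟩ = hP.sumCLM u - T0t† u := by
  refine adjoint_apply_eq hP.dense' _ fun φ => ?_
  have h := adjoint_isFormalAdjoint hP.dense_domain_right u (Submodule.inclusion hP.dom_eq.le φ)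
  rw [Submodule.coe_inclusion] at h
  have hsymm := hP.isSymmetric_sumCLM u φ
  simp only [ContinuousLinearMap.coe_coe] at hsymm
  rw [inner_sub_left, hsymm, hP.sumCLM_apply, inner_add_right, h, add_sub_cancel_right]

end IsDualPairT12

def graphMap (T0t : H →ₗ.[ℂ] H) : T0t†.domain →ₗ[ℂ] WithLp 2 (H × H) where
  toFun u := WithLp.toLp 2 (T0t† u, (u : H))
  map_add' u v := by
    simp only [LinearPMap.map_add, Submodule.coe_add, ← WithLp.toLp_add, Prod.mk_add_mk]
  map_smul' c u := by
    simp only [LinearPMap.map_smul, Submodule.coe_smul, RingHom.id_apply, ← WithLp.toLp_smul,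
      Prod.smul_mk]

@[simp]
theorem graphMap_apply (T0t : H →ₗ.[ℂ] H) (u : T0t†.domain) :
    graphMap T0t u = WithLp.toLp 2 (T0t† u, (u : H)) :=
  rfl

def dualGraphMap (T0 T0t : H →ₗ.[ℂ] H) (hW : T0t†.domain = T0†.domain) (v : T0t†.domain) :
    WithLp 2 (H × H) :=
  WithLp.toLp 2 ((v : H), -T0† ⟨v, hW.le v.2⟩)

section BoundaryForm

variable {T0 T0t : H →ₗ.[ℂ] H} {lam : ℝ} (hW : T0t†.domain = T0†.domain)

theorem bform_eq_inner (u v : T0t†.domain) :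
    bform T0 T0t hW u v = ⟪dualGraphMap T0 T0t hW v, graphMap T0t u⟫_ℂ := by
  simp [bform, pInner, dualGraphMap, WithLp.prod_inner_apply, sub_eq_add_neg]

theorem bform_eq_conj (hP : IsDualPairT12 T0 T0t lam) (u v : T0t†.domain) :
    bform T0 T0t hW u v = starRingEnd ℂ (bform T0 T0t hW v u) := by
  have hsymm := hP.isSymmetric_sumCLM
  simp only [LinearMap.IsSymmetric, ContinuousLinearMap.coe_coe] at hsymm
  simp only [bform, pInner, hP.adjoint_apply_eq_sub hW, inner_sub_left, hsymm, _root_.map_sub,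
    inner_conj_symm]
  ring

theorem W0set_subset_iorth (hP : IsDualPairT12 T0 T0t lam) (Y : Set T0t†.domain) :
    W0set T0 T0t ⊆ iorth T0 T0t hW Y := by
  intro u hu v _
  have hT1 : T0.closure ⟨u, hu⟩ = T0t† u := hP.closure_le_adjoint_right.2 rfl
  have hadj := (adjoint_isFormalAdjoint hP.dense').closure ⟨v, hW.le v.2⟩ ⟨u, hu⟩
  simp only [bform, pInner, ← hT1, hadj, sub_self]

end BoundaryForm

section GraphNorm

variable {T0t : H →ₗ.[ℂ] H}

theorem tendsto_gdist_iff {f : ℕ → T0t†.domain} {l : T0t†.domain} :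
    Tendsto (fun n => gdist T0t (f n) l) atTop (𝓝 0) ↔
      Tendsto (fun n => graphMap T0t (f n)) atTop (𝓝 (graphMap T0t l)) := by
  have hgdist : ∀ n, gdist T0t (f n) l = ‖(f n : H) - l‖ + ‖T0t† (f n) - T0t† l‖ := fun n => by
    simp only [gdist, gnorm, Submodule.coe_sub, LinearPMap.map_sub]
  rw [(WithLp.homeomorphProd 2 H H).isInducing.tendsto_nhds_iff, Prod.tendsto_iff]
  change _ ↔ Tendsto (fun n => T0t† (f n)) atTop (𝓝 (T0t† l)) ∧
    Tendsto (fun n => (f n : H)) atTop (𝓝 (l : H))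
  simp only [hgdist, tendsto_iff_norm_sub_tendsto_zero (f := fun n => T0t† (f n)),
    tendsto_iff_norm_sub_tendsto_zero (f := fun n => (f n : H))]
  constructor
  · intro h
    exact ⟨squeeze_zero (fun _ => norm_nonneg _) (fun _ => le_add_of_nonneg_left (norm_nonneg _)) h,
      squeeze_zero (fun _ => norm_nonneg _) (fun _ => le_add_of_nonneg_right (norm_nonneg _)) h⟩
  · rintro ⟨hT1, hu⟩
    simpa using hu.add hT1

theorem gclosed_preimage_graphMap {S : Set (WithLp 2 (H × H))} (hS : IsClosed S) :
    GClosed T0t (graphMap T0t ⁻¹' S) :=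
  fun _ hf _ hl => hS.mem_of_tendsto (tendsto_gdist_iff.1 hl) (Eventually.of_forall hf)

theorem isClosed_range_graphMap (hd : Dense (T0t.domain : Set H)) :
    IsClosed (Set.range (graphMap T0t)) := by
  have hrange : Set.range (graphMap T0t) =
      (fun e : WithLp 2 (H × H) => (e.snd, e.fst)) ⁻¹' (T0t†.graph : Set (H × H)) := by
    ext e
    constructor
    · rintro ⟨u, rfl⟩
      exact T0t†.mem_graph u
    · intro he
      obtain ⟨u, hu1, hu2⟩ := T0t†.mem_graph_iff.1 he
      exact ⟨u, (WithLp.ext_iff _).2 (Prod.ext hu2 hu1)⟩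
  rw [hrange]
  exact (adjoint_isClosed hd).preimage (by fun_prop)

theorem isClosed_map_graphMap (hd : Dense (T0t.domain : Set H))
    (X : Submodule ℂ T0t†.domain) (hX : GClosed T0t X) :
    IsClosed (X.map (graphMap T0t) : Set (WithLp 2 (H × H))) := by
  refine isSeqClosed_iff_isClosed.1 fun e p he hep => ?_
  choose x hxX hxe using he
  obtain ⟨l, rfl⟩ := (isClosed_range_graphMap hd).mem_of_tendsto hep
    (Eventually.of_forall fun n => ⟨x n, hxe n⟩)
  exact Submodule.mem_map_of_mem
    (hX x hxX l (tendsto_gdist_iff.2 (hep.congr fun n => (hxe n).symm)))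

theorem graphMap_injective : Function.Injective (graphMap T0t) :=
  fun _ _ h => Subtype.ext congr(($h).snd)

end GraphNorm

section Orthogonal

variable {T0 T0t : H →ₗ.[ℂ] H} {lam : ℝ} (hW : T0t†.domain = T0†.domain)

def iorthSubmodule (X : Set T0t†.domain) : Submodule ℂ T0t†.domain where
  carrier := iorth T0 T0t hW X
  zero_mem' v _ := by rw [bform_eq_inner, _root_.map_zero, inner_zero_right]
  add_mem' {u w} hu hw v hv := by
    rw [bform_eq_inner, _root_.map_add, inner_add_right, ← bform_eq_inner, ← bform_eq_inner,
      hu v hv, hw v hv, add_zero]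
  smul_mem' c u hu v hv := by
    rw [bform_eq_inner, _root_.map_smul, inner_smul_right, ← bform_eq_inner, hu v hv, mul_zero]

theorem gclosed_iorth (X : Set T0t†.domain) : GClosed T0t (iorth T0 T0t hW X) := by
  have hiorth : iorth T0 T0t hW X =
      graphMap T0t ⁻¹' ⋂ v ∈ X, {e | ⟪dualGraphMap T0 T0t hW v, e⟫_ℂ = 0} := by
    ext u
    simp only [iorth, bform_eq_inner, Set.mem_preimage, Set.mem_iInter, Set.mem_ofPred_eq]
  rw [hiorth]
  exact gclosed_preimage_graphMap <| isClosed_biInter fun v _ =>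
    isClosed_eq (continuous_const.inner continuous_id) continuous_const

theorem mem_iorth_iff_mem_orthogonal (hP : IsDualPairT12 T0 T0t lam) (X : Submodule ℂ T0t†.domain)
    (v : T0t†.domain) :
    v ∈ iorth T0 T0t hW X ↔ dualGraphMap T0 T0t hW v ∈ (X.map (graphMap T0t))ᗮ := by
  simp only [Submodule.mem_orthogonal, Submodule.mem_map, forall_exists_index, and_imp,
    forall_apply_eq_imp_iff₂]
  refine forall₂_congr fun x _ => ?_
  rw [bform_eq_conj hW hP, bform_eq_inner, map_eq_zero, inner_eq_zero_symm]

theorem exists_dualGraphMap_eq (hP : IsDualPairT12 T0 T0t lam) (X : Submodule ℂ T0t†.domain)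
    (hX : W0set T0 T0t ⊆ X) {p : WithLp 2 (H × H)} (hp : p ∈ (X.map (graphMap T0t))ᗮ) :
    ∃ v, dualGraphMap T0 T0t hW v = p := by
  have hadj : ∀ φ : T0.domain, ⟪-p.snd, (φ : H)⟫_ℂ = ⟪p.fst, T0 φ⟫_ℂ := fun φ => by
    have hφ : (⟨φ, hP.le_adjoint_right.1 φ.2⟩ : T0t†.domain) ∈ X := hX (T0.le_closure.1 φ.2)
    have hT1 : T0t† ⟨φ, hP.le_adjoint_right.1 φ.2⟩ = T0 φ := (hP.le_adjoint_right.2 rfl).symm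
    have horth : ⟪T0 φ, p.fst⟫_ℂ + ⟪(φ : H), p.snd⟫_ℂ = 0 := by
      simpa [WithLp.prod_inner_apply, hT1] using
        Submodule.inner_right_of_mem_orthogonal (Submodule.mem_map_of_mem hφ) hp
    have hconj := congrArg (starRingEnd ℂ) horth
    simp only [_root_.map_add, inner_conj_symm, _root_.map_zero] at hconj
    rw [inner_neg_left]
    linear_combination -hconj
  have hdom := mem_adjoint_domain_of_exists _ ⟨_, hadj⟩
  refine ⟨⟨p.fst, hW.ge hdom⟩, (WithLp.ext_iff _).2 (Prod.ext rfl ?_)⟩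
  simp [dualGraphMap, adjoint_apply_eq hP.dense' ⟨p.fst, hdom⟩ hadj]

theorem iorth_iorth_eq (hP : IsDualPairT12 T0 T0t lam) (X : Submodule ℂ T0t†.domain)
    (hcl : GClosed T0t X) (h0 : W0set T0 T0t ⊆ X) :
    iorth T0 T0t hW (iorth T0 T0t hW X) = X := by
  set A := X.map (graphMap T0t)
  have hK : dualGraphMap T0 T0t hW '' iorth T0 T0t hW X = Aᗮ := by
    ext p
    constructor
    · rintro ⟨v, hv, rfl⟩
      exact (mem_iorth_iff_mem_orthogonal hW hP X v).1 hv
    · intro hp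
      obtain ⟨v, rfl⟩ := exists_dualGraphMap_eq hW hP X h0 hp
      exact ⟨v, (mem_iorth_iff_mem_orthogonal hW hP X v).2 hp, rfl⟩
  have : CompleteSpace A := (isClosed_map_graphMap hP.dense_domain_right X hcl).completeSpace_coe
  ext u
  calc u ∈ iorth T0 T0t hW (iorth T0 T0t hW X)
      ↔ ∀ p ∈ dualGraphMap T0 T0t hW '' iorth T0 T0t hW X, ⟪p, graphMap T0t u⟫_ℂ = 0 := by
        simp only [iorth, Set.mem_ofPred_eq, Set.forall_mem_image, bform_eq_inner]
    _ ↔ graphMap T0t u ∈ A := by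
        rw [hK]
        simp only [SetLike.mem_coe]
        rw [← Submodule.mem_orthogonal, Submodule.orthogonal_orthogonal]
    _ ↔ u ∈ X := ⟨fun ⟨_, hx, hxu⟩ => graphMap_injective hxu ▸ hx, Submodule.mem_map_of_mem⟩

end Orthogonal

/-- Theorem 2.3 (vi), second part: `X^[⊥]` is always a graph-norm closed subspace
of `W`; and for a subspace `X` of `W`, `X^[⊥][⊥] = X` iff `X` is graph-norm
closed and `W₀ ⊆ X`. -/
theorem iorth_closed_and_double_iorth
    (T0 T0t : H →ₗ.[ℂ] H) (lam : ℝ) (hP : IsDualPairT12 T0 T0t lam)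
    (hW : T0t.adjoint.domain = T0.adjoint.domain) :
    (∀ X : Set ↥T0t.adjoint.domain,
      GClosed T0t (iorth T0 T0t hW X) ∧
      (0 : ↥T0t.adjoint.domain) ∈ iorth T0 T0t hW X ∧
      (∀ u v, u ∈ iorth T0 T0t hW X → v ∈ iorth T0 T0t hW X →
        u + v ∈ iorth T0 T0t hW X) ∧
      (∀ (c : ℂ) u, u ∈ iorth T0 T0t hW X → c • u ∈ iorth T0 T0t hW X)) ∧
    (∀ X : Submodule ℂ ↥T0t.adjoint.domain,
      iorth T0 T0t hW (iorth T0 T0t hW (X : Set _)) = (X : Set _) ↔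
        (GClosed T0t (X : Set _) ∧ W0set T0 T0t ⊆ (X : Set _))) := by
  refine ⟨fun X => ⟨gclosed_iorth hW X, (iorthSubmodule hW X).zero_mem,
      fun _ _ => (iorthSubmodule hW X).add_mem, fun c _ => (iorthSubmodule hW X).smul_mem c⟩,
    fun X => ⟨fun h => ?_, fun ⟨hcl, h0⟩ => iorth_iorth_eq hW hP X hcl h0⟩⟩
  rw [← h]
  exact ⟨gclosed_iorth hW _, W0set_subset_iorth hW hP _⟩
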